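/- arXiv:1511.01439 — 3 statements merged into one kernel-verified Lean document; each statement's English description precedes it below -/
import Mathlib

section
/- Let A be a real, symmetric, nonsingular d×d matrix and let Ψ : ℝ^d → ℝ be a smooth function with M_{d+2}(Ψ) := Σ_{2 ≤ |α| ≤ d+2} sup_{ξ∈ℝ^d} |∂^α Ψ(ξ)| < ∞. Set Φ_ε(ξ) = (1/2)⟨Aξ, ξ⟩ + ε Ψ(ξ). Then there exists ε₀ > 0 (depending on A, d, and M_{d+2}(Ψ)) such that for all 0 < ε ≤ ε₀: (a) |det Hess Φ_ε(ξ)| ≥ |det A|/2 > 0 for all ξ ∈ ℝ^d, and (b) the map ξ ↦ ∇Φ_ε(ξ) is injective on ℝ^d. -/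
/-
The Hessian of `Φ_ε` is `A + ε Hess Ψ`, an entrywise `εM`-perturbation of `A`, so continuity of
`det` at `A` keeps `|det Hess Φ_ε| ≥ |det A| / 2` once `ε` is small. The gradient is
`ξ ↦ Aξ + ε ∇Ψ(ξ)`, and `∇Ψ` is `M`-Lipschitz by the mean value inequality applied to `D²Ψ`; hence
`∇Φ_ε` approximates the invertible linear map `A` with constant `εM`, and such a map is injective
as soon as `εM ‖A⁻¹‖ < 1`.
-/

open scoped RealInnerProductSpace

noncomputable def hessM (d : ℕ) (Φ : EuclideanSpace ℝ (Fin d) → ℝ)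
    (ξ : EuclideanSpace ℝ (Fin d)) : Matrix (Fin d) (Fin d) ℝ :=
  fun i j => iteratedFDeriv ℝ 2 Φ ξ ![EuclideanSpace.single i 1, EuclideanSpace.single j 1]

theorem ApproximatesLinearOn.injective_of_mul_nnnorm_symm_lt_one {𝕜 E F : Type*}
    [NontriviallyNormedField 𝕜] [NormedAddCommGroup E] [NormedSpace 𝕜 E]
    [NormedAddCommGroup F] [NormedSpace 𝕜 F] {f : E → F} {f' : E ≃L[𝕜] F} {c : NNReal}
    (hf : ApproximatesLinearOn f (f' : E →L[𝕜] F) Set.univ c)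
    (hc : c * ‖(f'.symm : F →L[𝕜] E)‖₊ < 1) : Function.Injective f :=
  Set.injOn_univ.mp <| hf.injOn <| f'.subsingleton_or_nnnorm_symm_pos.imp id
    fun hpos => (NNReal.lt_inv_iff_mul_lt hpos.ne').mpr hc

theorem Matrix.exists_half_abs_det_le_abs_det {n : Type*} [Fintype n] [DecidableEq n]
    (A : Matrix n n ℝ) (hA : A.det ≠ 0) :
    ∃ δ > 0, ∀ B : Matrix n n ℝ, (∀ i j, |B i j - A i j| < δ) → |A.det| / 2 ≤ |B.det| := by
  open scoped Matrix.Norms.Elementwise in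
  obtain ⟨δ, hδ, hclose⟩ := Metric.continuousAt_iff.mp
    (continuous_id.matrix_det : Continuous fun B : Matrix n n ℝ => B.det).continuousAt
    (|A.det| / 2) (by positivity)
  refine ⟨δ, hδ, fun B hB => ?_⟩
  have hdist := hclose (show ‖B - A‖ < δ from (Matrix.norm_lt_iff hδ).mpr hB)
  rw [Real.dist_eq, id, id] at hdist
  linarith [abs_sub_abs_le_abs_sub A.det B.det, abs_sub_comm B.det A.det]

theorem Matrix.IsSymm.isSymmetric_toEuclideanCLM {n : Type*} [Fintype n] [DecidableEq n]
    {A : Matrix n n ℝ} (hA : A.IsSymm) :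
    ((Matrix.toEuclideanCLM (𝕜 := ℝ) A : EuclideanSpace ℝ n →L[ℝ] EuclideanSpace ℝ n) :
      EuclideanSpace ℝ n →ₗ[ℝ] EuclideanSpace ℝ n).IsSymmetric :=
  Matrix.isSymmetric_toEuclideanLin_iff.mpr (Matrix.isHermitian_iff_isSymm.mpr hA)

section QuadraticForm

variable {E : Type*} [NormedAddCommGroup E] [InnerProductSpace ℝ E]

theorem contDiff_half_inner_self (T : E →L[ℝ] E) {n : WithTop ℕ∞} :
    ContDiff ℝ n fun η => (1 / 2 : ℝ) * ⟪T η, η⟫ :=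
  contDiff_const.mul (T.contDiff.inner ℝ contDiff_id)

variable {T : E →L[ℝ] E}

theorem hasFDerivAt_half_inner_self (hT : (T : E →ₗ[ℝ] E).IsSymmetric) (ξ : E) :
    HasFDerivAt (fun η => (1 / 2 : ℝ) * ⟪T η, η⟫) (innerSL ℝ (T ξ)) ξ := by
  refine ((T.hasFDerivAt.inner ℝ (hasFDerivAt_id ξ)).const_mul (1 / 2 : ℝ)).congr_fderiv ?_
  ext v
  have hswap : ⟪T v, ξ⟫ = ⟪T ξ, v⟫ := (hT v ξ).trans (real_inner_comm _ _)
  simp only [smul_apply, ContinuousLinearMap.comp_apply,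
    ContinuousLinearMap.prod_apply, ContinuousLinearMap.id_apply, fderivInnerCLM_apply, id_eq,
    coe_innerSL_apply, hswap, smul_eq_mul]
  ring

theorem fderiv_half_inner_self (hT : (T : E →ₗ[ℝ] E).IsSymmetric) :
    fderiv ℝ (fun η => (1 / 2 : ℝ) * ⟪T η, η⟫) = (innerSL ℝ).comp T :=
  funext fun ξ => (hasFDerivAt_half_inner_self hT ξ).fderiv

theorem iteratedFDeriv_two_half_inner_self_apply (hT : (T : E →ₗ[ℝ] E).IsSymmetric)
    (ξ u v : E) : iteratedFDeriv ℝ 2 (fun η => (1 / 2 : ℝ) * ⟪T η, η⟫) ξ ![u, v] = ⟪T u, v⟫ := by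
  rw [iteratedFDeriv_two_apply, fderiv_half_inner_self hT, ContinuousLinearMap.fderiv]
  simp

theorem hasGradientAt_half_inner_self_add_const_mul [CompleteSpace E]
    (hT : (T : E →ₗ[ℝ] E).IsSymmetric) {Ψ : E → ℝ} {ξ : E} (hΨ : DifferentiableAt ℝ Ψ ξ)
    (ε : ℝ) :
    HasGradientAt (fun η => (1 / 2 : ℝ) * ⟪T η, η⟫ + ε * Ψ η) (T ξ + ε • gradient Ψ ξ) ξ := by
  rw [hasGradientAt_iff_hasFDerivAt, map_add, map_smul, gradient,
    LinearIsometryEquiv.apply_symm_apply]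
  exact (hasFDerivAt_half_inner_self hT ξ).add (hΨ.hasFDerivAt.const_mul ε)

end QuadraticForm

section GradientPerturbation

variable {E : Type*} [NormedAddCommGroup E] [InnerProductSpace ℝ E] [CompleteSpace E]

theorem norm_gradient_sub_le {f : E → ℝ} {M : ℝ} (hf : ContDiff ℝ 2 f)
    (hM : ∀ z, ‖iteratedFDeriv ℝ 2 f z‖ ≤ M) (x y : E) :
    ‖gradient f x - gradient f y‖ ≤ M * ‖x - y‖ := by
  have hgrad : gradient f x - gradient f y
      = (InnerProductSpace.toDual ℝ E).symm (fderiv ℝ f x - fderiv ℝ f y) := by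
    rw [map_sub]; rfl
  have hdiff : Differentiable ℝ (fderiv ℝ f) :=
    (hf.fderiv_right (m := 1) le_rfl).differentiable one_ne_zero
  have hbound : ∀ z ∈ Set.univ, ‖fderiv ℝ (fderiv ℝ f) z‖ ≤ M := fun z _ => by
    rw [← norm_iteratedFDeriv_one, norm_iteratedFDeriv_fderiv]
    exact hM z
  rw [hgrad, LinearIsometryEquiv.norm_map]
  exact convex_univ.norm_image_sub_le_of_norm_fderiv_le (fun z _ => hdiff z) hbound
    (Set.mem_univ y) (Set.mem_univ x)

theorem approximatesLinearOn_gradient_half_inner_self_add_const_mul {T : E →L[ℝ] E}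
    (hT : (T : E →ₗ[ℝ] E).IsSymmetric) {Ψ : E → ℝ} {M ε : ℝ} (hΨ : ContDiff ℝ 2 Ψ)
    (hM : ∀ z, ‖iteratedFDeriv ℝ 2 Ψ z‖ ≤ M) (hε : 0 ≤ ε) :
    ApproximatesLinearOn (gradient fun η => (1 / 2 : ℝ) * ⟪T η, η⟫ + ε * Ψ η) T Set.univ
      (ε * M).toNNReal := by
  intro x _ y _
  have hΨd : Differentiable ℝ Ψ := hΨ.differentiable two_ne_zero
  rw [(hasGradientAt_half_inner_self_add_const_mul hT (hΨd x) ε).gradient,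
    (hasGradientAt_half_inner_self_add_const_mul hT (hΨd y) ε).gradient,
    show T x + ε • gradient Ψ x - (T y + ε • gradient Ψ y) - T (x - y)
      = ε • (gradient Ψ x - gradient Ψ y) by rw [map_sub, smul_sub]; abel,
    norm_smul, Real.norm_of_nonneg hε, Real.coe_toNNReal _ (mul_nonneg hε
      ((norm_nonneg _).trans (hM 0))), mul_assoc]
  exact mul_le_mul_of_nonneg_left (norm_gradient_sub_le hΨ hM x y) hε

theorem injective_gradient_half_inner_self_add_const_mul (T : E ≃L[ℝ] E)
    (hT : ((T : E →L[ℝ] E) : E →ₗ[ℝ] E).IsSymmetric) {Ψ : E → ℝ} {M ε : ℝ}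
    (hΨ : ContDiff ℝ 2 Ψ) (hM : ∀ z, ‖iteratedFDeriv ℝ 2 Ψ z‖ ≤ M) (hε : 0 ≤ ε)
    (hsmall : ε * M * ‖(T.symm : E →L[ℝ] E)‖ < 1) :
    Function.Injective (gradient fun η => (1 / 2 : ℝ) * ⟪T η, η⟫ + ε * Ψ η) := by
  refine (approximatesLinearOn_gradient_half_inner_self_add_const_mul hT hΨ hM
    hε).injective_of_mul_nnnorm_symm_lt_one (f' := T) ?_
  rwa [← NNReal.coe_lt_coe, NNReal.coe_mul, Real.coe_toNNReal _ (mul_nonneg hε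
    ((norm_nonneg _).trans (hM 0))), coe_nnnorm, NNReal.coe_one]

end GradientPerturbation

section Hessian

variable {d : ℕ}

theorem hessM_add_const_mul {f g : EuclideanSpace ℝ (Fin d) → ℝ} {ξ : EuclideanSpace ℝ (Fin d)}
    (hf : ContDiffAt ℝ 2 f ξ) (hg : ContDiffAt ℝ 2 g ξ) (c : ℝ) :
    hessM d (fun η => f η + c * g η) ξ = hessM d f ξ + c • hessM d g ξ := by
  ext i j
  have hsmul : (fun η => f η + c * g η) = fun η => f η + (c • g) η := rfl
  simp only [hessM, Matrix.add_apply, Matrix.smul_apply]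
  rw [hsmul, fun_iteratedFDeriv_add_apply hf (show ContDiffAt ℝ 2 (c • g) ξ from hg.const_smul c),
    iteratedFDeriv_const_smul_apply hg]
  rfl

theorem abs_hessM_apply_le (f : EuclideanSpace ℝ (Fin d) → ℝ) (ξ : EuclideanSpace ℝ (Fin d))
    (i j : Fin d) : |hessM d f ξ i j| ≤ ‖iteratedFDeriv ℝ 2 f ξ‖ := by
  simpa [hessM, Fin.prod_univ_two] using
    (iteratedFDeriv ℝ 2 f ξ).le_opNorm ![EuclideanSpace.single i 1, EuclideanSpace.single j 1]

theorem hessM_half_inner_toEuclideanLin {A : Matrix (Fin d) (Fin d) ℝ} (hA : A.IsSymm)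
    (ξ : EuclideanSpace ℝ (Fin d)) :
    hessM d (fun η => (1 / 2 : ℝ) * ⟪Matrix.toEuclideanLin A η, η⟫) ξ = A := by
  ext i j
  refine (iteratedFDeriv_two_half_inner_self_apply hA.isSymmetric_toEuclideanCLM ξ _ _).trans ?_
  change ⟪Matrix.toEuclideanLin A _, _⟫ = _
  simp [Matrix.toLpLin_apply, EuclideanSpace.inner_single_right, hA.apply j i]

theorem abs_hessM_half_inner_toEuclideanLin_add_const_mul_sub_le
    {A : Matrix (Fin d) (Fin d) ℝ} (hA : A.IsSymm) {Ψ : EuclideanSpace ℝ (Fin d) → ℝ} {M ε : ℝ}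
    (hΨ : ContDiff ℝ 2 Ψ) (hM : ∀ z, ‖iteratedFDeriv ℝ 2 Ψ z‖ ≤ M) (hε : 0 ≤ ε)
    (ξ : EuclideanSpace ℝ (Fin d)) (i j : Fin d) :
    |hessM d (fun η => (1 / 2 : ℝ) * ⟪Matrix.toEuclideanLin A η, η⟫ + ε * Ψ η) ξ i j - A i j|
      ≤ ε * M := by
  have hq : ContDiff ℝ 2 fun η : EuclideanSpace ℝ (Fin d) =>
      (1 / 2 : ℝ) * ⟪Matrix.toEuclideanLin A η, η⟫ :=
    contDiff_half_inner_self (Matrix.toEuclideanCLM (𝕜 := ℝ) A)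
  rw [hessM_add_const_mul hq.contDiffAt hΨ.contDiffAt, hessM_half_inner_toEuclideanLin hA,
    Matrix.add_apply, add_sub_cancel_left, Matrix.smul_apply, smul_eq_mul, abs_mul,
    abs_of_nonneg hε]
  exact mul_le_mul_of_nonneg_left ((abs_hessM_apply_le Ψ ξ i j).trans (hM ξ)) hε

end Hessian

theorem stmt9 (d : ℕ) (A : Matrix (Fin d) (Fin d) ℝ) (hA : A.IsSymm)
    (hAdet : A.det ≠ 0)
    (Ψ : EuclideanSpace ℝ (Fin d) → ℝ) (hΨ : ContDiff ℝ (⊤ : ℕ∞) Ψ)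
    (M : ℝ) (hM : ∀ n ∈ Finset.Icc 2 (d + 2), ∀ ξ, ‖iteratedFDeriv ℝ n Ψ ξ‖ ≤ M) :
    ∃ ε₀ : ℝ, 0 < ε₀ ∧ ∀ ε : ℝ, 0 < ε → ε ≤ ε₀ →
      0 < |A.det| / 2 ∧
      (∀ ξ, |A.det| / 2 ≤
        |(hessM d (fun η => (1 / 2 : ℝ) * ⟪Matrix.toEuclideanLin A η, η⟫ + ε * Ψ η) ξ).det|) ∧
      Function.Injective
        (gradient (fun η => (1 / 2 : ℝ) * ⟪Matrix.toEuclideanLin A η, η⟫ + ε * Ψ η)) := by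
  have hM0 : 0 ≤ M := (norm_nonneg _).trans (hM 2 (by simp) 0)
  have hD2 : ∀ ξ, ‖iteratedFDeriv ℝ 2 Ψ ξ‖ ≤ M := hM 2 (by simp)
  have hΨ2 : ContDiff ℝ 2 Ψ := hΨ.of_le (WithTop.coe_le_coe.mpr le_top)
  -- Built from `nonsingInvUnit` rather than `IsUnit.unit`, so that `⇑T` unfolds to
  -- `Matrix.toEuclideanLin A` and `T` matches `Φ_ε` by definitional unfolding.
  let T : EuclideanSpace ℝ (Fin d) ≃L[ℝ] EuclideanSpace ℝ (Fin d) := .ofUnit <|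
    Units.map (Matrix.toEuclideanCLM (𝕜 := ℝ)).toMonoidHom
      (A.nonsingInvUnit (isUnit_iff_ne_zero.mpr hAdet))
  set N : ℝ := ‖(T.symm : EuclideanSpace ℝ (Fin d) →L[ℝ] EuclideanSpace ℝ (Fin d))‖
  obtain ⟨δ, hδ, hdet⟩ := A.exists_half_abs_det_le_abs_det hAdet
  obtain ⟨ε₁, hε₁, hε₁M⟩ := exists_pos_mul_lt hδ M
  obtain ⟨ε₂, hε₂, hε₂MN⟩ := exists_pos_mul_lt one_pos (M * N)
  refine ⟨min ε₁ ε₂, lt_min hε₁ hε₂, fun ε hε hεle =>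
    ⟨by positivity, fun ξ => hdet _ fun i j => ?_, ?_⟩⟩
  · refine (abs_hessM_half_inner_toEuclideanLin_add_const_mul_sub_le hA hΨ2 hD2 hε.le
      ξ i j).trans_lt ?_
    calc ε * M ≤ ε₁ * M := by gcongr; exact hεle.trans (min_le_left _ _)
      _ < δ := by rwa [mul_comm]
  · refine injective_gradient_half_inner_self_add_const_mul T hA.isSymmetric_toEuclideanCLM
      hΨ2 hD2 hε.le ?_
    calc ε * M * N ≤ ε₂ * (M * N) := by
          rw [mul_assoc]; gcongr; exact hεle.trans (min_le_right _ _)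
      _ < 1 := by rwa [mul_comm]
end

section
/- Let Φ : ℝ^d → ℝ be smooth and let V be an open set on which M_k := Σ_{2 ≤ |α| ≤ k} sup_{ξ∈V} |∂^α Φ(ξ)| < ∞ for all relevant k (with the convention M_1 = 1). For i ∈ {1,…,d} define A_i(ξ) = ∂_i Φ(ξ) / |∇Φ(ξ)|² on the set where ∇Φ(ξ) ≠ 0. Then for every multi-index α with |α| ≥ 1 there exists a nondecreasing function F : [0,∞) → [0,∞) (depending only on d and |α|) such that for all ξ ∈ V with ∇Φ(ξ) ≠ 0: |∂^α A_i(ξ)| ≤ F(M_{1+|α|}) Σ_{k=2}^{1+|α|} |∇Φ(ξ)|^{-k}. -/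
/-!
Write `A_i = ∂_iΦ · u⁻¹` with `u = |∇Φ|²`. Since `D(u^{-m}) = -m u^{-(m+1)} Du`, induction on the
order, with `m` free, and the Leibniz rule bound `D^n(u^{-m})` by `(M+1)^{2n}` times a sum of powers
`|∇Φ|^{-k}`: every derivative landing on `u^{-m}` raises the exponent by two, while the derivatives
of `u` are `O(M|∇Φ| + M²)`, and the first one is even `O(M|∇Φ|)`. One more application of the
Leibniz rule, using `∂_iΦ = O(|∇Φ|)` and `D^j ∂_iΦ = O(M)`, gives the bound on `D^n A_i`.
-/

noncomputable def phaseSemi (d k : ℕ) (V : Set (EuclideanSpace ℝ (Fin d)))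
    (Φ : EuclideanSpace ℝ (Fin d) → ℝ) : ℝ :=
  ∑ n ∈ Finset.Icc 2 k, sSup ((fun ξ => ‖iteratedFDeriv ℝ n Φ ξ‖) '' V)

open Finset
open scoped ContDiff Topology

noncomputable def invPowSum (g : ℝ) (a b : ℕ) : ℝ := ∑ k ∈ Icc a b, (g ^ k)⁻¹

lemma invPowSum_nonneg {g : ℝ} (hg : 0 ≤ g) (a b : ℕ) : 0 ≤ invPowSum g a b :=
  sum_nonneg fun _ _ => by positivity

lemma invPowSum_succ_mul {g : ℝ} (hg : g ≠ 0) (a b : ℕ) :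
    invPowSum g (a + 1) (b + 1) * g = invPowSum g a b := by
  rw [invPowSum, invPowSum, ← map_add_right_Icc, sum_map, sum_mul]
  refine sum_congr rfl fun k _ => ?_
  rw [addRightEmbedding_apply, pow_succ, mul_inv, inv_mul_cancel_right₀ hg]

lemma invPowSum_mono {g : ℝ} (hg : 0 ≤ g) {a b a' b' : ℕ} (ha : a' ≤ a) (hb : b ≤ b') :
    invPowSum g a b ≤ invPowSum g a' b' :=
  sum_le_sum_of_subset_of_nonneg (Icc_subset_Icc ha hb) fun _ _ _ => by positivity

lemma hasDerivAt_inv_pow (m : ℕ) {t : ℝ} (ht : t ≠ 0) :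
    HasDerivAt (fun s : ℝ => (s ^ m)⁻¹) (-m * (t ^ (m + 1))⁻¹) t := by
  refine ((hasDerivAt_inv (pow_ne_zero m ht)).comp t (hasDerivAt_pow m t)).congr_deriv ?_
  rcases m with _ | m
  · simp
  · rw [Nat.add_sub_cancel]
    field_simp
    ring

lemma sum_range_choose_succ_add_two (b : ℕ) :
    ∑ i ∈ range b, (b + 1).choose (i + 1) + 2 = 2 ^ (b + 1) := by
  have h := Nat.sum_range_choose (b + 1)
  rw [sum_range_succ, sum_range_succ'] at h
  simpa using h

section

variable {E F : Type*} [NormedAddCommGroup E] [NormedSpace ℝ E]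
  [NormedAddCommGroup F] [InnerProductSpace ℝ F] {v : E → F}

lemma norm_iteratedFDeriv_smul_le_of_isOpen {G : Type*} [NormedAddCommGroup G] [NormedSpace ℝ G]
    {s : Set E} (hs : IsOpen s) {f : E → ℝ} {g : E → G} (hf : ContDiffOn ℝ ∞ f s)
    (hg : ContDiffOn ℝ ∞ g s) {x : E} (hx : x ∈ s) (n : ℕ) :
    ‖iteratedFDeriv ℝ n (fun y => f y • g y) x‖ ≤ ∑ i ∈ range (n + 1),
      (n.choose i : ℝ) * ‖iteratedFDeriv ℝ i f x‖ * ‖iteratedFDeriv ℝ (n - i) g x‖ := by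
  simpa only [iteratedFDerivWithin_of_isOpen _ hs hx] using
    norm_iteratedFDerivWithin_smul_le hf hg hs.uniqueDiffOn hx (n := n) (mod_cast le_top)

/-- In the Leibniz expansion of `D^b ⟪v, v⟫` the two extreme terms give `2 M ‖v ξ‖`, the
`2 ^ b - 2` others `M ^ 2` each. -/
lemma norm_iteratedFDeriv_norm_sq_le (hv : ContDiff ℝ ∞ v) {ξ : E} {M : ℝ} {b : ℕ} (hb : 1 ≤ b)
    (hM : ∀ j ∈ Icc 1 b, ‖iteratedFDeriv ℝ j v ξ‖ ≤ M) :
    ‖iteratedFDeriv ℝ b (fun η => ‖v η‖ ^ 2) ξ‖ ≤ 2 * M * ‖v ξ‖ + (2 ^ b - 2) * M ^ 2 := by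
  obtain ⟨b, rfl⟩ : ∃ c, b = c + 1 := ⟨b - 1, by omega⟩
  have hLeib := (innerSL ℝ (E := F)).norm_iteratedFDeriv_le_of_bilinear_of_le_one hv hv ξ
    (n := b + 1) (mod_cast le_top) (norm_innerSL_le ℝ)
  have hu : (fun η => ‖v η‖ ^ 2) = fun η => innerSL ℝ (v η) (v η) := by
    ext η; simp
  rw [hu]
  refine hLeib.trans ?_
  rw [sum_range_succ, sum_range_succ']
  have hchoose : ∑ i ∈ range b, ((b + 1).choose (i + 1) : ℝ) = 2 ^ (b + 1) - 2 := by
    rw [eq_sub_iff_add_eq]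
    exact_mod_cast sum_range_choose_succ_add_two b
  have hM0 : 0 ≤ M := (norm_nonneg _).trans (hM 1 (by simp))
  have hMtop := hM (b + 1) (by simp)
  have hmiddle : ∑ i ∈ range b, ((b + 1).choose (i + 1) : ℝ) * ‖iteratedFDeriv ℝ (i + 1) v ξ‖ *
      ‖iteratedFDeriv ℝ (b + 1 - (i + 1)) v ξ‖ ≤ (2 ^ (b + 1) - 2) * M ^ 2 := by
    rw [← hchoose, sum_mul]
    refine sum_le_sum fun i hi => ?_
    rw [mem_range] at hi
    rw [mul_assoc, sq]
    gcongr
    · exact hM _ (by simp; omega)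
    · exact hM _ (by simp; omega)
  have hlast : ‖iteratedFDeriv ℝ (b + 1 - (b + 1)) v ξ‖ = ‖v ξ‖ := by
    rw [Nat.sub_self, norm_iteratedFDeriv_zero]
  simp only [Nat.choose_zero_right, Nat.choose_self, Nat.cast_one, one_mul, Nat.sub_zero,
    hlast, norm_iteratedFDeriv_zero]
  nlinarith [norm_nonneg (v ξ), norm_nonneg (iteratedFDeriv ℝ (b + 1) v ξ)]

lemma hasFDerivAt_inv_norm_sq_pow {ξ : E} (hv : DifferentiableAt ℝ v ξ) (hξ : v ξ ≠ 0) (m : ℕ) :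
    HasFDerivAt (fun η => ((‖v η‖ ^ 2) ^ m)⁻¹)
      ((-m : ℝ) • (((‖v ξ‖ ^ 2) ^ (m + 1))⁻¹ • fderiv ℝ (fun η => ‖v η‖ ^ 2) ξ)) ξ := by
  rw [smul_smul]
  exact (hasDerivAt_inv_pow m (by positivity)).comp_hasFDerivAt ξ (hv.norm_sq ℝ).hasFDerivAt

lemma contDiffOn_inv_norm_sq_pow (hv : ContDiff ℝ ∞ v) (m : ℕ) :
    ContDiffOn ℝ ∞ (fun η => ((‖v η‖ ^ 2) ^ m)⁻¹) {η | v η ≠ 0} :=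
  ((hv.norm_sq ℝ).pow m).contDiffOn.inv fun η (hη : v η ≠ 0) => by positivity

lemma norm_iteratedFDeriv_succ_inv_norm_sq_pow_le (hv : ContDiff ℝ ∞ v) {ξ : E} (hξ : v ξ ≠ 0)
    (m n : ℕ) :
    ‖iteratedFDeriv ℝ (n + 1) (fun η => ((‖v η‖ ^ 2) ^ m)⁻¹) ξ‖ ≤
      m * ∑ j ∈ range (n + 1), (n.choose j : ℝ) *
        ‖iteratedFDeriv ℝ j (fun η => ((‖v η‖ ^ 2) ^ (m + 1))⁻¹) ξ‖ *
        ‖iteratedFDeriv ℝ (n - j + 1) (fun η => ‖v η‖ ^ 2) ξ‖ := by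
  have hs : IsOpen {η | v η ≠ 0} := isOpen_ne_fun hv.continuous continuous_const
  have hw := contDiffOn_inv_norm_sq_pow hv (m + 1)
  have hDu : ContDiff ℝ ∞ (fderiv ℝ (fun η => ‖v η‖ ^ 2)) :=
    (hv.norm_sq ℝ).fderiv_right (by simp)
  have hderiv : fderiv ℝ (fun η => ((‖v η‖ ^ 2) ^ m)⁻¹) =ᶠ[𝓝 ξ] fun η =>
      (-m : ℝ) • (((‖v η‖ ^ 2) ^ (m + 1))⁻¹ • fderiv ℝ (fun η => ‖v η‖ ^ 2) η) :=
    Filter.eventually_of_mem (hs.mem_nhds hξ) fun η hη =>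
      (hasFDerivAt_inv_norm_sq_pow (hv.differentiable (by simp) η) hη m).fderiv
  have hprod : ContDiffAt ℝ n (fun η =>
      ((‖v η‖ ^ 2) ^ (m + 1))⁻¹ • fderiv ℝ (fun η => ‖v η‖ ^ 2) η) ξ :=
    ((hw.smul hDu.contDiffOn).contDiffAt (hs.mem_nhds hξ)).of_le (mod_cast le_top)
  rw [← norm_iteratedFDeriv_fderiv, (hderiv.iteratedFDeriv ℝ n).eq_of_nhds,
    iteratedFDeriv_const_smul_apply' hprod, norm_smul, norm_neg, Real.norm_natCast]
  gcongr
  simpa only [norm_iteratedFDeriv_fderiv] using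
    norm_iteratedFDeriv_smul_le_of_isOpen hs hw hDu.contDiffOn hξ n

lemma invPowSum_mul_norm_sq_deriv_bound_le {g M : ℝ} (hg : 0 < g) (hM : 0 ≤ M) {m n j : ℕ}
    (hj : j ≤ n) :
    invPowSum g (2 * (m + 1) + min j 1) (2 * (m + 1) + j) *
        (2 * M * g + (2 ^ (n - j + 1) - 2) * M ^ 2) ≤
      2 ^ (n + 1) * (M + 1) ^ 2 * invPowSum g (2 * m + 1) (2 * m + (n + 1)) := by
  set Wj := invPowSum g (2 * (m + 1) + min j 1) (2 * (m + 1) + j)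
  set W := invPowSum g (2 * m + 1) (2 * m + (n + 1))
  have hW : 0 ≤ W := invPowSum_nonneg hg.le _ _
  have hP : (2 : ℝ) ≤ 2 ^ (n + 1) := le_self_pow₀ one_le_two (by omega)
  have hfirst : Wj * g ≤ W := by
    have hshift := invPowSum_succ_mul hg.ne' (2 * m + 1 + min j 1) (2 * m + 1 + j)
    rw [show 2 * m + 1 + min j 1 + 1 = 2 * (m + 1) + min j 1 by ring,
      show 2 * m + 1 + j + 1 = 2 * (m + 1) + j by ring] at hshift
    rw [hshift]
    exact invPowSum_mono hg.le (by omega) (by omega)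
  -- only `j < n` contributes to the `M ^ 2` term, since the first derivative of `‖v‖²` is `O(M g)`
  have hsecond : Wj * (2 ^ (n - j + 1) - 2) ≤ W * (2 ^ (n + 1) - 2) := by
    rcases hj.lt_or_eq with hj | rfl
    · have h2 : (2 : ℝ) ≤ 2 ^ (n - j + 1) := le_self_pow₀ one_le_two (by omega)
      have h2' : (2 : ℝ) ^ (n - j + 1) ≤ 2 ^ (n + 1) := pow_le_pow_right₀ one_le_two (by omega)
      exact mul_le_mul (invPowSum_mono hg.le (by omega) (by omega)) (by linarith)
        (by linarith) hW
    · simp only [Nat.sub_self, zero_add, pow_one, sub_self, mul_zero]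
      exact mul_nonneg hW (by linarith)
  calc Wj * (2 * M * g + (2 ^ (n - j + 1) - 2) * M ^ 2)
      = 2 * M * (Wj * g) + M ^ 2 * (Wj * (2 ^ (n - j + 1) - 2)) := by ring
    _ ≤ 2 * M * W + M ^ 2 * (W * (2 ^ (n + 1) - 2)) := by gcongr
    _ ≤ 2 ^ (n + 1) * (M + 1) ^ 2 * W := by
      have : 0 ≤ W * (2 * M ^ 2 + 2 * (2 ^ (n + 1) - 1) * M + 2 ^ (n + 1)) :=
        mul_nonneg hW (by nlinarith)
      nlinarith

variable (E F) in
/-- The weights run over `‖v ξ‖⁻ᵏ` for `2m + 1 ≤ k ≤ 2m + n` when `n ≥ 1`, and are the single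
term `‖v ξ‖⁻²ᵐ` when `n = 0`. -/
def InvNormSqPowDerivBound (n m : ℕ) (C : ℝ) : Prop :=
  ∀ (v : E → F) (ξ : E) (M : ℝ), ContDiff ℝ ∞ v → v ξ ≠ 0 →
    (∀ j ∈ Icc 1 n, ‖iteratedFDeriv ℝ j v ξ‖ ≤ M) →
    ‖iteratedFDeriv ℝ n (fun η => ((‖v η‖ ^ 2) ^ m)⁻¹) ξ‖ ≤
      C * (M + 1) ^ (2 * n) * invPowSum ‖v ξ‖ (2 * m + min n 1) (2 * m + n)

lemma invNormSqPowDerivBound_zero (m : ℕ) : InvNormSqPowDerivBound E F 0 m 1 := by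
  intro v ξ M _ _ _
  simp [invPowSum, ← pow_mul]

lemma norm_iteratedFDeriv_inv_norm_sq_pow_mul_le {n m j : ℕ} (hj : j ≤ n) {C : ℝ} (hC0 : 0 ≤ C)
    (hC : InvNormSqPowDerivBound E F j (m + 1) C) (hv : ContDiff ℝ ∞ v) {ξ : E} (hξ : v ξ ≠ 0)
    {M : ℝ} (hM : ∀ k ∈ Icc 1 (n + 1), ‖iteratedFDeriv ℝ k v ξ‖ ≤ M) :
    ‖iteratedFDeriv ℝ j (fun η => ((‖v η‖ ^ 2) ^ (m + 1))⁻¹) ξ‖ *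
        ‖iteratedFDeriv ℝ (n - j + 1) (fun η => ‖v η‖ ^ 2) ξ‖ ≤
      C * 2 ^ (n + 1) * (M + 1) ^ (2 * (n + 1)) *
        invPowSum ‖v ξ‖ (2 * m + 1) (2 * m + (n + 1)) := by
  have hg : 0 < ‖v ξ‖ := norm_pos_iff.2 hξ
  have hM0 : 0 ≤ M := (norm_nonneg _).trans (hM 1 (by simp))
  have hX := hC v ξ M hv hξ fun k hk => hM k (Icc_subset_Icc le_rfl (by omega) hk)
  have hY := norm_iteratedFDeriv_norm_sq_le hv (b := n - j + 1) (by omega)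
    fun k hk => hM k (Icc_subset_Icc le_rfl (by omega) hk)
  have hpow : (M + 1) ^ (2 * j) * (M + 1) ^ 2 ≤ (M + 1) ^ (2 * (n + 1)) := by
    rw [← pow_add]
    exact pow_le_pow_right₀ (by linarith) (by omega)
  have hCj : 0 ≤ C * (M + 1) ^ (2 * j) := mul_nonneg hC0 (by positivity)
  calc _ ≤ C * (M + 1) ^ (2 * j) *
        (invPowSum ‖v ξ‖ (2 * (m + 1) + min j 1) (2 * (m + 1) + j) *
          (2 * M * ‖v ξ‖ + (2 ^ (n - j + 1) - 2) * M ^ 2)) := by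
        rw [← mul_assoc]
        exact mul_le_mul hX hY (norm_nonneg _) (mul_nonneg hCj (invPowSum_nonneg hg.le _ _))
    _ ≤ C * (M + 1) ^ (2 * j) *
        (2 ^ (n + 1) * (M + 1) ^ 2 * invPowSum ‖v ξ‖ (2 * m + 1) (2 * m + (n + 1))) :=
        mul_le_mul_of_nonneg_left (invPowSum_mul_norm_sq_deriv_bound_le hg hM0 hj) hCj
    _ = C * 2 ^ (n + 1) * ((M + 1) ^ (2 * j) * (M + 1) ^ 2) *
        invPowSum ‖v ξ‖ (2 * m + 1) (2 * m + (n + 1)) := by ring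
    _ ≤ _ := by
        gcongr
        exact invPowSum_nonneg hg.le _ _

lemma invNormSqPowDerivBound_succ {n m : ℕ} {C : Fin (n + 1) → ℝ} (hC0 : ∀ j, 0 ≤ C j)
    (hC : ∀ j : Fin (n + 1), InvNormSqPowDerivBound E F j (m + 1) (C j)) :
    InvNormSqPowDerivBound E F (n + 1) m
      (m * 2 ^ (n + 1) * ∑ j : Fin (n + 1), (n.choose j : ℝ) * C j) := by
  intro v ξ M hv hξ hM
  refine (norm_iteratedFDeriv_succ_inv_norm_sq_pow_le hv hξ m n).trans ?_
  rw [min_eq_right (by omega : 1 ≤ n + 1), sum_range fun j => (n.choose j : ℝ) *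
    ‖iteratedFDeriv ℝ j (fun η => ((‖v η‖ ^ 2) ^ (m + 1))⁻¹) ξ‖ *
    ‖iteratedFDeriv ℝ (n - j + 1) (fun η => ‖v η‖ ^ 2) ξ‖]
  calc _ ≤ (m : ℝ) * ∑ j : Fin (n + 1), (n.choose j : ℝ) * (C j * 2 ^ (n + 1) *
        (M + 1) ^ (2 * (n + 1)) * invPowSum ‖v ξ‖ (2 * m + 1) (2 * m + (n + 1))) := by
        refine mul_le_mul_of_nonneg_left (sum_le_sum fun j _ => ?_) (by positivity)
        rw [mul_assoc]
        exact mul_le_mul_of_nonneg_left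
          (norm_iteratedFDeriv_inv_norm_sq_pow_mul_le j.is_le (hC0 j) (hC j) hv hξ hM)
          (by positivity)
    _ = _ := by
        simp only [mul_sum, sum_mul]
        exact sum_congr rfl fun j _ => by ring

lemma exists_invNormSqPowDerivBound (n : ℕ) :
    ∀ m, ∃ C, 0 ≤ C ∧ InvNormSqPowDerivBound E F n m C := by
  induction n using Nat.strong_induction_on with
  | _ n ih =>
    rcases n with _ | n
    · exact fun m => ⟨1, zero_le_one, invNormSqPowDerivBound_zero m⟩
    · intro m
      choose C hC0 hC using fun j : Fin (n + 1) => ih j j.isLt (m + 1)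
      exact ⟨_, mul_nonneg (by positivity) (sum_nonneg fun j _ => mul_nonneg (by positivity)
        (hC0 j)), invNormSqPowDerivBound_succ hC0 hC⟩

/-- The undifferentiated numerator is `O(‖v ξ‖)`, which shifts the weights down by one. -/
lemma norm_iteratedFDeriv_comp_mul_invPowSum_le {n j : ℕ} (hn : 1 ≤ n) (hj : j ≤ n)
    {L : F →L[ℝ] ℝ} (hL : ‖L‖ ≤ 1) (hv : ContDiff ℝ ∞ v) {ξ : E} (hξ : v ξ ≠ 0) {M : ℝ}
    (hM : ∀ k ∈ Icc 1 n, ‖iteratedFDeriv ℝ k v ξ‖ ≤ M) :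
    ‖iteratedFDeriv ℝ (n - j) (L ∘ v) ξ‖ * invPowSum ‖v ξ‖ (2 * 1 + min j 1) (2 * 1 + j) ≤
      (M + 1) ^ (2 * (n - j)) * invPowSum ‖v ξ‖ 2 (n + 1) := by
  have hg : 0 < ‖v ξ‖ := norm_pos_iff.2 hξ
  have hM0 : 0 ≤ M := (norm_nonneg _).trans (hM 1 (by simp [hn]))
  rcases hj.lt_or_eq with hj | rfl
  · have hY : ‖iteratedFDeriv ℝ (n - j) (L ∘ v) ξ‖ ≤ M :=
      ((L.norm_iteratedFDeriv_comp_left hv.contDiffAt (WithTop.coe_le_coe.2 le_top)).trans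
        (mul_le_of_le_one_left (norm_nonneg _) hL)).trans
        (hM _ (mem_Icc.2 ⟨by omega, by omega⟩))
    have hMpow : M ≤ (M + 1) ^ (2 * (n - j)) :=
      (le_add_of_nonneg_right zero_le_one).trans (le_self_pow₀ (by linarith) (by omega))
    exact mul_le_mul (hY.trans hMpow) (invPowSum_mono hg.le (by omega) (by omega))
      (invPowSum_nonneg hg.le _ _) (by positivity)
  · rw [Nat.sub_self, norm_iteratedFDeriv_zero, mul_zero, pow_zero, one_mul, min_eq_right hn,
      show 2 * 1 + j = j + 1 + 1 by omega, ← invPowSum_succ_mul hg.ne' 2 (j + 1), mul_comm]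
    exact mul_le_mul_of_nonneg_left (L.le_of_opNorm_le hL _ |>.trans_eq (one_mul _))
      (invPowSum_nonneg hg.le _ _)

lemma exists_norm_iteratedFDeriv_div_norm_sq_le {n : ℕ} (hn : 1 ≤ n) :
    ∃ C, 0 ≤ C ∧ ∀ (v : E → F) (L : F →L[ℝ] ℝ) (ξ : E) (M : ℝ), ContDiff ℝ ∞ v → ‖L‖ ≤ 1 →
      v ξ ≠ 0 → (∀ j ∈ Icc 1 n, ‖iteratedFDeriv ℝ j v ξ‖ ≤ M) →
      ‖iteratedFDeriv ℝ n (fun η => L (v η) / ‖v η‖ ^ 2) ξ‖ ≤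
        C * (M + 1) ^ (2 * n) * invPowSum ‖v ξ‖ 2 (n + 1) := by
  choose C hC0 hC using fun j => exists_invNormSqPowDerivBound (E := E) (F := F) j 1
  refine ⟨∑ j ∈ range (n + 1), n.choose j * C j,
    sum_nonneg fun j _ => mul_nonneg (by positivity) (hC0 j), ?_⟩
  intro v L ξ M hv hL hξ hM
  have hs : IsOpen {η | v η ≠ 0} := isOpen_ne_fun hv.continuous continuous_const
  have hfun : (fun η => L (v η) / ‖v η‖ ^ 2) = fun η => ((‖v η‖ ^ 2) ^ 1)⁻¹ • (L ∘ v) η := by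
    ext η
    simp [div_eq_inv_mul]
  rw [hfun, sum_mul, sum_mul]
  refine (norm_iteratedFDeriv_smul_le_of_isOpen hs (contDiffOn_inv_norm_sq_pow hv 1)
    (L.contDiff.comp hv).contDiffOn hξ n).trans (sum_le_sum fun j hj => ?_)
  have hj : j ≤ n := Nat.lt_succ_iff.1 (mem_range.1 hj)
  have hX := hC j v ξ M hv hξ fun k hk => hM k (Icc_subset_Icc le_rfl hj hk)
  have hkey := norm_iteratedFDeriv_comp_mul_invPowSum_le hn hj hL hv hξ hM
  have hCj : 0 ≤ (n.choose j : ℝ) * C j * (M + 1) ^ (2 * j) :=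
    mul_nonneg (mul_nonneg (by positivity) (hC0 j)) ((even_two_mul j).pow_nonneg _)
  calc _ ≤ (n.choose j : ℝ) * (C j * (M + 1) ^ (2 * j) *
        invPowSum ‖v ξ‖ (2 * 1 + min j 1) (2 * 1 + j)) *
        ‖iteratedFDeriv ℝ (n - j) (L ∘ v) ξ‖ := by gcongr
    _ = (n.choose j : ℝ) * C j * (M + 1) ^ (2 * j) * (‖iteratedFDeriv ℝ (n - j) (L ∘ v) ξ‖ *
        invPowSum ‖v ξ‖ (2 * 1 + min j 1) (2 * 1 + j)) := by ring
    _ ≤ (n.choose j : ℝ) * C j * (M + 1) ^ (2 * j) *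
        ((M + 1) ^ (2 * (n - j)) * invPowSum ‖v ξ‖ 2 (n + 1)) :=
        mul_le_mul_of_nonneg_left hkey hCj
    _ = _ := by
        rw [show 2 * n = 2 * j + 2 * (n - j) by omega, pow_add]
        ring

end

section Gradient

variable {E : Type*} [NormedAddCommGroup E] [InnerProductSpace ℝ E] [CompleteSpace E]

lemma gradient_eq_toDual_symm_comp_fderiv (Φ : E → ℝ) :
    gradient Φ = (InnerProductSpace.toDual ℝ E).symm ∘ fderiv ℝ Φ := rfl

lemma ContDiff.gradient {Φ : E → ℝ} (hΦ : ContDiff ℝ ∞ Φ) : ContDiff ℝ ∞ (gradient Φ) := by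
  rw [gradient_eq_toDual_symm_comp_fderiv]
  exact (InnerProductSpace.toDual ℝ E).symm.contDiff.comp (hΦ.fderiv_right (by simp))

lemma norm_iteratedFDeriv_gradient (Φ : E → ℝ) (j : ℕ) (ξ : E) :
    ‖iteratedFDeriv ℝ j (gradient Φ) ξ‖ = ‖iteratedFDeriv ℝ (j + 1) Φ ξ‖ := by
  rw [gradient_eq_toDual_symm_comp_fderiv, LinearIsometryEquiv.norm_iteratedFDeriv_comp_left,
    norm_iteratedFDeriv_fderiv]

end Gradient

lemma norm_iteratedFDeriv_le_phaseSemi {d K k : ℕ} {V : Set (EuclideanSpace ℝ (Fin d))}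
    {Φ : EuclideanSpace ℝ (Fin d) → ℝ}
    (hbdd : ∀ k ∈ Icc 2 K, BddAbove ((fun ξ => ‖iteratedFDeriv ℝ k Φ ξ‖) '' V))
    {ξ : EuclideanSpace ℝ (Fin d)} (hξ : ξ ∈ V) (hk : k ∈ Icc 2 K) :
    ‖iteratedFDeriv ℝ k Φ ξ‖ ≤ phaseSemi d K V Φ := by
  have hsup : ∀ k ∈ Icc 2 K,
      ‖iteratedFDeriv ℝ k Φ ξ‖ ≤ sSup ((fun ξ => ‖iteratedFDeriv ℝ k Φ ξ‖) '' V) :=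
    fun k hk => le_csSup (hbdd k hk) ⟨ξ, hξ, rfl⟩
  exact (hsup k hk).trans (single_le_sum (fun k hk => (norm_nonneg _).trans (hsup k hk)) hk)

theorem stmt10 (d n : ℕ) (hn : 1 ≤ n) (i : Fin d) :
    ∃ F : ℝ → ℝ, Monotone F ∧ (∀ x, 0 ≤ F x) ∧
      ∀ (Φ : EuclideanSpace ℝ (Fin d) → ℝ) (V : Set (EuclideanSpace ℝ (Fin d))),
        ContDiff ℝ (⊤ : ℕ∞) Φ → IsOpen V →
        (∀ k ∈ Finset.Icc 2 (1 + n),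
          BddAbove ((fun ξ => ‖iteratedFDeriv ℝ k Φ ξ‖) '' V)) →
        ∀ ξ ∈ V, gradient Φ ξ ≠ 0 →
          ‖iteratedFDeriv ℝ n
              (fun η => fderiv ℝ Φ η (EuclideanSpace.single i 1) / ‖gradient Φ η‖ ^ 2)
              ξ‖ ≤
            F (phaseSemi d (1 + n) V Φ) *
              ∑ k ∈ Finset.Icc 2 (1 + n), (‖gradient Φ ξ‖ ^ k)⁻¹ := by
  obtain ⟨C, hC0, hC⟩ := exists_norm_iteratedFDeriv_div_norm_sq_le
    (E := EuclideanSpace ℝ (Fin d)) (F := EuclideanSpace ℝ (Fin d)) hn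
  refine ⟨fun x => C * (max x 0 + 1) ^ (2 * n), fun x y hxy => ?_, fun x => by positivity, ?_⟩
  · dsimp only
    gcongr
  intro Φ V hΦ _ hbdd ξ hξ hgrad
  set e : EuclideanSpace ℝ (Fin d) := EuclideanSpace.single i 1
  have hnum : ∀ η, fderiv ℝ Φ η e = innerSL ℝ e (gradient Φ η) := fun η => by
    rw [innerSL_apply_apply, real_inner_comm, inner_gradient_left]
  have he : ‖innerSL ℝ e‖ ≤ 1 := by simp [e, innerSL_apply_norm]
  have hM : ∀ j ∈ Icc 1 n,
      ‖iteratedFDeriv ℝ j (gradient Φ) ξ‖ ≤ max (phaseSemi d (1 + n) V Φ) 0 := fun j hj => by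
    rw [norm_iteratedFDeriv_gradient]
    exact le_max_of_le_left (norm_iteratedFDeriv_le_phaseSemi hbdd hξ (by simp at hj ⊢; omega))
  simpa only [hnum, invPowSum, add_comm 1 n] using
    hC (gradient Φ) (innerSL ℝ e) ξ _ hΦ.gradient he hgrad hM
end

section
/- There is a constant C_d depending only on d such that the following holds. Let Φ : ℝ^d → ℝ be smooth, b : ℝ^d → ℂ integrable with compact support K, and V an open neighborhood of K on which the second derivatives of Φ are bounded: sup_{|α|=2, ξ∈V} |∂^α Φ(ξ)| ≤ M₂, and |det Hess Φ(ξ)| ≥ a₀ > 0 on V. Then a₀ ≤ C_d M₂^d; moreover, for every λ ≥ 1 with λ^{1/2} a₀ ≤ 1 one has |∫_{ℝ^d} e^{iλΦ(ξ)} b(ξ) dξ| ≤ C_d M₂^d ‖b‖_{L¹(ℝ^d)} a₀^{-(1+d)} λ^{-d/2}. -/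
/-!
In the regime `√λ · a₀ ≤ 1` the decay factor satisfies `λ^(-d/2) ≥ a₀^d`, so the right-hand side
is at least `C M₂^d ‖b‖₁ / a₀`. Expanding the determinant of the Hessian by the Leibniz formula
gives `a₀ ≤ |det Hess Φ| ≤ d! M₂^d`, so with `C = d! + 1` this is at least `‖b‖₁`, which bounds the
oscillatory integral trivially.
-/

open MeasureTheory

lemma Matrix.abs_det_le_factorial_mul_pow {n : Type*} [Fintype n] [DecidableEq n]
    {A : Matrix n n ℝ} {M : ℝ} (hA : ∀ i j, |A i j| ≤ M) :
    |A.det| ≤ (Fintype.card n).factorial * M ^ Fintype.card n := by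
  simpa only [nsmul_eq_mul, AbsoluteValue.abs_apply] using Matrix.det_le (abv := AbsoluteValue.abs) hA

lemma norm_integral_exp_I_mul_mul_le {α : Type*} [MeasurableSpace α] (μ : Measure α)
    (t : ℝ) (φ : α → ℝ) (b : α → ℂ) :
    ‖∫ x, Complex.exp (Complex.I * t * φ x) * b x ∂μ‖ ≤ ∫ x, ‖b x‖ ∂μ := by
  refine (norm_integral_le_integral_norm _).trans_eq (integral_congr_ae ?_)
  filter_upwards with x
  simp [Complex.norm_exp, Complex.mul_re]

lemma pow_le_rpow_neg_half_of_sqrt_mul_le_one {a t : ℝ} (ha : 0 < a) (ht : 0 < t)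
    (h : √t * a ≤ 1) (n : ℕ) : a ^ n ≤ t ^ (-(n : ℝ) / 2) := by
  have hsqrt : √t ≤ a⁻¹ := by rwa [← one_div, le_div_iff₀ ha]
  have hrpow : t ^ (-(n : ℝ) / 2) = (√t ^ n)⁻¹ := by
    rw [Real.sqrt_eq_rpow, ← Real.rpow_natCast, ← Real.rpow_mul ht.le, ← Real.rpow_neg ht.le]
    ring_nf
  calc a ^ n = (a⁻¹ ^ n)⁻¹ := by rw [inv_pow, inv_inv]
    _ ≤ (√t ^ n)⁻¹ := by gcongr
    _ = t ^ (-(n : ℝ) / 2) := hrpow.symm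

lemma le_mul_div_pow_mul_of_pow_le {a K B L : ℝ} (ha : 0 < a) (haK : a ≤ K) (hB : 0 ≤ B)
    (n : ℕ) (hL : a ^ n ≤ L) : B ≤ K * B / a ^ (1 + n) * L := by
  have hK : 0 ≤ K := ha.le.trans haK
  calc B ≤ K * B / a := by rw [le_div_iff₀ ha, mul_comm]; gcongr
    _ = K * B / a ^ (1 + n) * a ^ n := by field_simp; ring
    _ ≤ K * B / a ^ (1 + n) * L := by gcongr

theorem stmt16 (d : ℕ) :
    ∃ C : ℝ, 0 < C ∧
      ∀ (Φ : EuclideanSpace ℝ (Fin d) → ℝ) (b : EuclideanSpace ℝ (Fin d) → ℂ)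
        (V : Set (EuclideanSpace ℝ (Fin d))) (a₀ M₂ : ℝ),
        ContDiff ℝ (⊤ : ℕ∞) Φ → Integrable b → HasCompactSupport b →
        IsOpen V → V.Nonempty → tsupport b ⊆ V →
        (∀ ξ ∈ V, ∀ i j, |hessM d Φ ξ i j| ≤ M₂) →
        0 < a₀ → (∀ ξ ∈ V, a₀ ≤ |(hessM d Φ ξ).det|) →
        a₀ ≤ C * M₂ ^ d ∧
        ∀ lam : ℝ, 1 ≤ lam → Real.sqrt lam * a₀ ≤ 1 →
          ‖∫ ξ : EuclideanSpace ℝ (Fin d),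
              Complex.exp (Complex.I * (lam : ℂ) * (Φ ξ : ℂ)) * b ξ‖ ≤
            C * M₂ ^ d * (∫ ξ : EuclideanSpace ℝ (Fin d), ‖b ξ‖) / a₀ ^ (1 + d) *
              lam ^ (-(d : ℝ) / 2) := by
  refine ⟨d.factorial + 1, by positivity, ?_⟩
  intro Φ b V a₀ M₂ _ _ _ _ ⟨ξ₀, hξ₀⟩ _ hM ha₀ hdet
  have ha₀_le : a₀ ≤ (d.factorial + 1) * M₂ ^ d := by
    have hdet_le := Matrix.abs_det_le_factorial_mul_pow (hM ξ₀ hξ₀)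
    rw [Fintype.card_fin] at hdet_le
    nlinarith [hdet ξ₀ hξ₀]
  refine ⟨ha₀_le, fun lam hlam hsqrt => ?_⟩
  have hpow := pow_le_rpow_neg_half_of_sqrt_mul_le_one ha₀ (by linarith) hsqrt d
  exact (norm_integral_exp_I_mul_mul_le volume lam Φ b).trans
    (le_mul_div_pow_mul_of_pow_le ha₀ ha₀_le (integral_nonneg fun _ => norm_nonneg _) d hpow)
end
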